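/- arXiv:1804.06640 — 2 statements merged into one kernel-verified Lean document; each statement's English description precedes it below -/
import Mathlib

section
/- Let S be a right LCM monoid. Noncore irreducibility is preserved under core equivalence: if s ∈ I(S) and t ∼ s, then t ∈ I(S). -/
variable {S : Type*}

/-- The principal right ideal `sS` of a monoid. -/
def rIdeal [Monoid S] (s : S) : Set S := {x | ∃ r : S, x = s * r}

/-- A right LCM monoid: left cancellative, and any intersection of two principal
right ideals is empty or again a principal right ideal. -/
def IsRightLCMMonoid (S : Type*) [Monoid S] : Prop :=
  (∀ a b c : S, a * b = a * c → b = c) ∧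
  (∀ s t : S, rIdeal s ∩ rIdeal t = (∅ : Set S) ∨ ∃ r : S, rIdeal s ∩ rIdeal t = rIdeal r)

/-- The core of a right LCM monoid. -/
def core (S : Type*) [Monoid S] : Set S := {a | ∀ s : S, (rIdeal a ∩ rIdeal s).Nonempty}

/-- Core equivalence: `s ∼ t` iff `s * a = t * b` for some core elements `a, b`. -/
def coreEquiv [Monoid S] (s t : S) : Prop :=
  ∃ a ∈ core S, ∃ b ∈ core S, s * a = t * b

/-- Noncore irreducible elements of a right LCM monoid. -/
def NoncoreIrred [Monoid S] (s : S) : Prop :=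
  s ∉ core S ∧ ∀ a ∈ core S, ∀ t r : S, s * a = t * r → t ∈ core S ∨ r ∈ core S

lemma mem_core_iff' [Monoid S] (a : S) : a ∈ core S ↔ ∀ s : S, ∃ p q : S, a * p = s * q := by
  constructor
  · intro h s
    obtain ⟨x, ⟨p, hp⟩, ⟨q, hq⟩⟩ := h s
    exact ⟨p, q, by rw [← hp, ← hq]⟩
  · intro h s
    obtain ⟨p, q, h⟩ := h s
    exact ⟨a * p, ⟨p, rfl⟩, ⟨q, h⟩⟩

lemma core_mul' [Monoid S] {a b : S} (ha : a ∈ core S) (hb : b ∈ core S) :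
    a * b ∈ core S := by
  rw [mem_core_iff'] at *
  intro s
  obtain ⟨p, q, h1⟩ := ha s
  obtain ⟨u, v, h2⟩ := hb p
  exact ⟨u, q * v, by rw [mul_assoc, h2, ← mul_assoc, h1, mul_assoc]⟩

lemma core_of_mul_left' [Monoid S] {a b : S} (h : a * b ∈ core S) : a ∈ core S := by
  rw [mem_core_iff'] at *
  intro s
  obtain ⟨p, q, h1⟩ := h s
  exact ⟨b * p, q, by rw [← mul_assoc, h1]⟩

lemma core_of_mul_right' [Monoid S] (canc : ∀ a b c : S, a * b = a * c → b = c)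
    {a b : S} (ha : a ∈ core S) (h : a * b ∈ core S) : b ∈ core S := by
  rw [mem_core_iff'] at *
  intro s
  obtain ⟨p, q, h1⟩ := h (a * s)
  refine ⟨p, q, canc a _ _ ?_⟩
  rw [← mul_assoc, h1, ← mul_assoc]

theorem stmt13 [Monoid S] (hS : IsRightLCMMonoid S)
    (s t : S) (hs : NoncoreIrred s) (hts : coreEquiv t s) :
    NoncoreIrred t := by
  obtain ⟨canc, lcm⟩ := hS
  obtain ⟨a, ha, b, hb, heq⟩ := hts
  constructor
  · intro ht
    exact hs.1 (core_of_mul_left' (heq ▸ core_mul' ht ha : s * b ∈ core S))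
  · intro c hc u r heq2
    -- lcm of a and c
    have hne : rIdeal a ∩ rIdeal c ≠ (∅ : Set S) := by
      obtain ⟨x, hx⟩ := ha c
      intro h
      exact absurd (h ▸ hx) (Set.notMem_empty x)
    obtain ⟨w, hw⟩ := (lcm a c).resolve_left hne
    have hwmem : w ∈ rIdeal a ∩ rIdeal c := by
      rw [hw]; exact ⟨1, (mul_one w).symm⟩
    obtain ⟨⟨x, hx⟩, ⟨y, hy⟩⟩ := hwmem
    -- w is in the core
    have hwcore : w ∈ core S := by
      rw [mem_core_iff']
      intro s'
      obtain ⟨p, q, h1⟩ := (mem_core_iff' a).mp ha s'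
      obtain ⟨m, n, h2⟩ := (mem_core_iff' c).mp hc (a * p)
      have hmem : a * p * n ∈ rIdeal a ∩ rIdeal c := ⟨⟨p * n, by rw [mul_assoc]⟩, ⟨m, h2.symm⟩⟩
      rw [hw] at hmem
      obtain ⟨k, hk⟩ := hmem
      exact ⟨k, q * n, by rw [← hk, h1, mul_assoc]⟩
    have hxcore : x ∈ core S := core_of_mul_right' canc ha (hx ▸ hwcore)
    have hbx : b * x ∈ core S := core_mul' hb hxcore
    have key : s * (b * x) = u * (r * y) := by
      rw [← mul_assoc, ← heq, mul_assoc, ← hx, hy, ← mul_assoc, heq2, mul_assoc]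
    rcases hs.2 (b * x) hbx u (r * y) key with h | h
    · exact Or.inl h
    · exact Or.inr (core_of_mul_left' h)
end

section
/- Let S be a right LCM monoid with generalized scale N and s ∈ S \ S_c. Then there exist k ≥ 1 and s_1, ..., s_k ∈ S with N_{s_i} ∈ Irr N(S) for all i and s ∼ s_1 s_2 ⋯ s_k. -/
variable {S : Type*}

/-- A generalized scale on a right LCM monoid. -/
def IsGenScale [Monoid S] (N : S →* ℕ+) : Prop :=
  (∃ s : S, N s ≠ 1) ∧
  (∀ n : ℕ+, (∃ s : S, N s = n) →
    Nat.card (Quot (fun x y : {s : S // N s = n} => coreEquiv x.1 y.1)) = (n : ℕ)) ∧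
  (∀ s t : S, N s = N t → coreEquiv s t ∨ rIdeal s ∩ rIdeal t = (∅ : Set S)) ∧
  (∀ (s : S) (n : ℕ+), (∃ u : S, N u = n) →
    ∃ t : S, N t = n ∧ (rIdeal s ∩ rIdeal t).Nonempty)

/-- Irreducibility of an element of the image submonoid `N(S) ⊆ ℕ^×`. -/
def IrrInScale [Monoid S] (N : S →* ℕ+) (n : ℕ+) : Prop :=
  n ≠ 1 ∧ ∀ k l : ℕ+, (∃ u : S, N u = k) → (∃ v : S, N v = l) → n = k * l → k = 1 ∨ l = 1

section Aux

variable [Monoid S]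

lemma mem_rIdeal_self (s : S) : s ∈ rIdeal s := ⟨1, (mul_one s).symm⟩

lemma one_mem_core : (1 : S) ∈ core S :=
  fun s => ⟨s, ⟨s, (one_mul s).symm⟩, 1, (mul_one s).symm⟩

lemma core_inter {a : S} (ha : a ∈ core S) (s : S) : ∃ x y : S, a * x = s * y := by
  obtain ⟨z, ⟨x, hx⟩, ⟨y, hy⟩⟩ := ha s
  exact ⟨x, y, by rw [← hx, ← hy]⟩

lemma mul_mem_core {a b : S} (ha : a ∈ core S) (hb : b ∈ core S) : a * b ∈ core S := by
  intro s
  obtain ⟨x, y, hxy⟩ := core_inter ha s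
  obtain ⟨m, n, hmn⟩ := core_inter hb x
  refine ⟨a * b * m, ⟨m, rfl⟩, y * n, ?_⟩
  rw [mul_assoc a b m, hmn, ← mul_assoc, hxy, mul_assoc]

lemma coreEquiv_refl (s : S) : coreEquiv s s := ⟨1, one_mem_core, 1, one_mem_core, rfl⟩

lemma coreEquiv_symm {s t : S} (h : coreEquiv s t) : coreEquiv t s := by
  obtain ⟨a, ha, b, hb, hab⟩ := h
  exact ⟨b, hb, a, ha, hab.symm⟩

lemma coreEquiv_inter {s t : S} (h : coreEquiv s t) : (rIdeal s ∩ rIdeal t).Nonempty := by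
  obtain ⟨a, _, b, _, hab⟩ := h
  exact ⟨s * a, ⟨a, rfl⟩, b, hab⟩

lemma exists_lcm (hS : IsRightLCMMonoid S) {s t : S} (h : (rIdeal s ∩ rIdeal t).Nonempty) :
    ∃ r p q : S, rIdeal s ∩ rIdeal t = rIdeal r ∧ r = s * p ∧ r = t * q := by
  rcases hS.2 s t with h0 | ⟨r, hr⟩
  · rw [h0] at h; exact absurd h (by simp)
  · have hrm : r ∈ rIdeal s ∩ rIdeal t := hr ▸ mem_rIdeal_self r
    obtain ⟨⟨p, hp⟩, ⟨q, hq⟩⟩ := hrm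
    exact ⟨r, p, q, hr, hp, hq⟩

/-- If `a` is a core element and `rS = aS ∩ yS` with `r = y q`, then `q` is core. -/
lemma lcm_core_right (hS : IsRightLCMMonoid S) {a y r q : S} (ha : a ∈ core S)
    (hr : rIdeal a ∩ rIdeal y = rIdeal r) (hq : r = y * q) : q ∈ core S := by
  intro z
  obtain ⟨m, n, hmn⟩ := core_inter ha (y * z)
  have hmem : a * m ∈ rIdeal r := by
    rw [← hr]
    exact ⟨⟨m, rfl⟩, ⟨z * n, by rw [hmn, mul_assoc]⟩⟩
  obtain ⟨j, hj⟩ := hmem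
  have h1 : y * (q * j) = y * (z * n) := by
    rw [← mul_assoc, ← hq, ← hj, hmn, mul_assoc]
  have h2 : q * j = z * n := hS.1 y _ _ h1
  exact ⟨q * j, ⟨j, rfl⟩, n, h2⟩

lemma coreEquiv_trans (hS : IsRightLCMMonoid S) {s t r : S}
    (h1 : coreEquiv s t) (h2 : coreEquiv t r) : coreEquiv s r := by
  obtain ⟨a, ha, b, hb, hab⟩ := h1
  obtain ⟨c, hc, d, hd, hcd⟩ := h2
  have hne : (rIdeal b ∩ rIdeal c).Nonempty := by
    obtain ⟨x, y, hxy⟩ := core_inter hb c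
    exact ⟨b * x, ⟨x, rfl⟩, y, hxy⟩
  obtain ⟨e, p, q, he, hep, heq⟩ := exists_lcm hS hne
  have hq : q ∈ core S := lcm_core_right hS hb he heq
  have hp : p ∈ core S := lcm_core_right hS hc (by rw [Set.inter_comm]; exact he) hep
  refine ⟨a * p, mul_mem_core ha hp, d * q, mul_mem_core hd hq, ?_⟩
  calc s * (a * p) = (s * a) * p := by rw [mul_assoc]
    _ = t * (b * p) := by rw [hab, mul_assoc]
    _ = t * (c * q) := by rw [← hep, ← heq]
    _ = (t * c) * q := by rw [mul_assoc]
    _ = r * (d * q) := by rw [hcd, mul_assoc]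

lemma coreEquiv_mul_left (hS : IsRightLCMMonoid S) {u v : S} (t : S)
    (h : coreEquiv u v) : coreEquiv (t * u) (t * v) := by
  obtain ⟨a, ha, b, hb, hab⟩ := h
  exact ⟨a, ha, b, hb, by rw [mul_assoc, hab, mul_assoc]⟩

end Aux

section Scale

variable [Monoid S]

/-- The relation on `N⁻¹(n)` induced by core equivalence. -/
def scaleRel (N : S →* ℕ+) (n : ℕ+) (x y : {s : S // N s = n}) : Prop := coreEquiv x.1 y.1

lemma quot_exact (hS : IsRightLCMMonoid S) {N : S →* ℕ+} {n : ℕ+}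
    {x y : {s : S // N s = n}}
    (h : Quot.mk (scaleRel N n) x = Quot.mk (scaleRel N n) y) : coreEquiv x.1 y.1 := by
  have hE : Equivalence (scaleRel N n) :=
    ⟨fun a => coreEquiv_refl _, fun h => coreEquiv_symm h,
      fun h1 h2 => coreEquiv_trans hS h1 h2⟩
  exact hE.eqvGen_iff.mp (Quot.eqvGen_exact h)

lemma card_quot (hN : IsGenScale N) {n : ℕ+} (hn : ∃ s : S, N s = n) :
    Nat.card (Quot (scaleRel N n)) = (n : ℕ) := hN.2.1 n hn

lemma finite_quot (hN : IsGenScale N) {n : ℕ+} (hn : ∃ s : S, N s = n) :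
    Finite (Quot (scaleRel N n)) := by
  by_contra h
  rw [not_finite_iff_infinite] at h
  have := card_quot hN hn
  rw [Nat.card_eq_zero_of_infinite] at this
  exact absurd this.symm n.ne_zero

lemma N_core_eq_one (hS : IsRightLCMMonoid S) {N : S →* ℕ+} (hN : IsGenScale N)
    {c : S} (hc : c ∈ core S) : N c = 1 := by
  by_contra h
  have hcard : Nat.card (Quot (scaleRel N (N c))) = ((N c : ℕ+) : ℕ) :=
    card_quot hN ⟨c, rfl⟩
  have hfin : Finite (Quot (scaleRel N (N c))) := finite_quot hN ⟨c, rfl⟩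
  have h2 : 1 < Nat.card (Quot (scaleRel N (N c))) := by
    rw [hcard]
    have h3 : (N c : ℕ) ≠ 1 := fun hh => h (PNat.coe_injective (by simpa using hh))
    have h4 : 0 < ((N c : ℕ+) : ℕ) := (N c).2
    omega
  rw [Finite.one_lt_card_iff_nontrivial] at h2
  obtain ⟨y, hy⟩ := exists_ne (Quot.mk (scaleRel N (N c)) ⟨c, rfl⟩)
  obtain ⟨⟨t, ht⟩, rfl⟩ := Quot.exists_rep y
  have hnct : ¬ coreEquiv t c := fun hcc => hy (Quot.sound hcc)
  rcases hN.2.2.1 t c ht with hcc | hdisj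
  · exact hnct hcc
  · obtain ⟨z, hz1, hz2⟩ := hc t
    have : z ∈ rIdeal t ∩ rIdeal c := ⟨hz2, hz1⟩
    rw [hdisj] at this
    exact this

lemma mem_core_of_N_eq_one (hS : IsRightLCMMonoid S) {N : S →* ℕ+} (hN : IsGenScale N)
    {s : S} (h : N s = 1) : s ∈ core S := by
  intro t
  obtain ⟨u, hu1, hu2⟩ := hN.2.2.2 t 1 ⟨1, map_one N⟩
  have hcard : Nat.card (Quot (scaleRel N 1)) = 1 := card_quot hN ⟨1, map_one N⟩
  have hsub : Subsingleton (Quot (scaleRel N 1)) :=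
    (Nat.card_eq_one_iff_unique.mp hcard).1
  have heq : Quot.mk (scaleRel N 1) ⟨s, h⟩ = Quot.mk (scaleRel N 1) ⟨u, hu1⟩ :=
    Subsingleton.elim _ _
  obtain ⟨a, ha, b, hb, hab⟩ := quot_exact hS heq
  obtain ⟨w, ⟨x, hx⟩, ⟨y, hy⟩⟩ := hu2
  obtain ⟨p, q, hpq⟩ := core_inter hb y
  refine ⟨s * (a * p), ⟨a * p, rfl⟩, x * q, ?_⟩
  calc s * (a * p) = (s * a) * p := by rw [mul_assoc]
    _ = u * (b * p) := by rw [hab, mul_assoc]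
    _ = u * (y * q) := by rw [hpq]
    _ = (u * y) * q := by rw [mul_assoc]
    _ = t * (x * q) := by rw [← hy, hx, mul_assoc]

/-- Key factorization lemma: if `N s = k * l` with `k, l` in the image of `N`,
then `s` is core equivalent to a product `t * u` with `N t = k`, `N u = l`. -/
lemma key_factor (hS : IsRightLCMMonoid S) {N : S →* ℕ+} (hN : IsGenScale N)
    {k l : ℕ+} (hk : ∃ u : S, N u = k) (hl : ∃ v : S, N v = l)
    {s : S} (hs : N s = k * l) :
    ∃ t u : S, N t = k ∧ N u = l ∧ coreEquiv s (t * u) := by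
  have hkl : ∃ w : S, N w = k * l := by
    obtain ⟨u, hu⟩ := hk; obtain ⟨v, hv⟩ := hl
    exact ⟨u * v, by rw [map_mul, hu, hv]⟩
  have hfin : Finite (Quot (scaleRel N (k * l))) := finite_quot hN hkl
  set f : Quot (scaleRel N k) × Quot (scaleRel N l) → Quot (scaleRel N (k * l)) :=
    fun p => Quot.lift
      (fun y : {s : S // N s = l} =>
        Quot.mk (scaleRel N (k * l))
          ⟨p.1.out.1 * y.1, by rw [map_mul, p.1.out.2, y.2]⟩)
      (fun y y' hyy => Quot.sound (by
        obtain ⟨a, ha, b, hb, hab⟩ := hyy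
        exact ⟨a, ha, b, hb, by rw [mul_assoc, hab, mul_assoc]⟩)) p.2
    with hf
  have hinj : Function.Injective f := by
    rintro ⟨i, j⟩ ⟨i', j'⟩ hfe
    obtain ⟨y, rfl⟩ := Quot.exists_rep j
    obtain ⟨y', rfl⟩ := Quot.exists_rep j'
    have hce : coreEquiv (i.out.1 * y.1) (i'.out.1 * y'.1) := quot_exact hS hfe
    obtain ⟨a, ha, b, hb, hab⟩ := hce
    have hne : (rIdeal i.out.1 ∩ rIdeal i'.out.1).Nonempty :=
      ⟨i.out.1 * (y.1 * a), ⟨y.1 * a, rfl⟩, y'.1 * b,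
        by rw [← mul_assoc, hab, mul_assoc]⟩
    have hNeq : N i.out.1 = N i'.out.1 := by rw [i.out.2, i'.out.2]
    have hii : coreEquiv i.out.1 i'.out.1 := by
      rcases hN.2.2.1 _ _ hNeq with hcc | hdisj
      · exact hcc
      · obtain ⟨z, hz⟩ := hne
        rw [hdisj] at hz
        exact absurd hz (by simp)
    have hieq : i = i' := by
      rw [← i.out_eq, ← i'.out_eq]
      exact Quot.sound hii
    subst hieq
    have hyy : y.1 * a = y'.1 * b := by
      apply hS.1 i.out.1
      rw [← mul_assoc, hab, mul_assoc]
    have : (Quot.mk (scaleRel N l) y) = Quot.mk (scaleRel N l) y' :=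
      Quot.sound ⟨a, ha, b, hb, hyy⟩
    rw [this]
  have hcards : Nat.card (Quot (scaleRel N k) × Quot (scaleRel N l)) =
      Nat.card (Quot (scaleRel N (k * l))) := by
    rw [Nat.card_prod, card_quot hN hk, card_quot hN hl, card_quot hN hkl,
      PNat.mul_coe]
  have hbij : Function.Bijective f :=
    (Nat.bijective_iff_injective_and_card f).mpr ⟨hinj, hcards⟩
  obtain ⟨⟨i, j⟩, hij⟩ := hbij.2 (Quot.mk (scaleRel N (k * l)) ⟨s, hs⟩)
  obtain ⟨y, rfl⟩ := Quot.exists_rep j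
  have : coreEquiv (i.out.1 * y.1) s := quot_exact hS hij
  exact ⟨i.out.1, y.1, i.out.2, y.2, coreEquiv_symm this⟩

lemma exists_irr_factor {N : S →* ℕ+} :
    ∀ m : ℕ, ∀ n : ℕ+, (n : ℕ) = m → (∃ u : S, N u = n) → n ≠ 1 →
      ∃ k l : ℕ+, (∃ u : S, N u = k) ∧ (∃ v : S, N v = l) ∧ IrrInScale N k ∧ n = k * l := by
  intro m
  induction m using Nat.strong_induction_on with
  | _ m ih =>
    rintro n rfl hn hne
    by_cases hirr : IrrInScale N n
    · exact ⟨n, 1, hn, ⟨1, map_one N⟩, hirr, (mul_one n).symm⟩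
    · rw [IrrInScale, not_and_or] at hirr
      rcases hirr with h1 | h2
      · exact absurd hne (by simpa using h1)
      · push_neg at h2
        obtain ⟨a, b, hau, hbv, hab, ha1, hb1⟩ := h2
        have hb2 : 2 ≤ (b : ℕ) := by
          have h3 : 0 < (b : ℕ) := b.2
          have h4 : (b : ℕ) ≠ 1 := fun hh => hb1 (PNat.coe_injective (by simpa using hh))
          omega
        have halt : (a : ℕ) < (n : ℕ) := by
          rw [hab, PNat.mul_coe]
          have h3 : 0 < (a : ℕ) := a.2
          nlinarith
        obtain ⟨k, l, hk, hl, hkirr, hfac⟩ := ih (a : ℕ) halt a rfl hau ha1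
        refine ⟨k, l * b, hk, ?_, hkirr, by rw [hab, hfac, mul_assoc]⟩
        obtain ⟨u, hu⟩ := hl; obtain ⟨v, hv⟩ := hbv
        exact ⟨u * v, by rw [map_mul, hu, hv]⟩

end Scale

theorem stmt16 [Monoid S] (hS : IsRightLCMMonoid S)
    (N : S →* ℕ+) (hN : IsGenScale N)
    (s : S) (hs : s ∉ core S) :
    ∃ l : List S, l ≠ [] ∧ (∀ x ∈ l, IrrInScale N (N x)) ∧ coreEquiv s l.prod := by
  suffices h : ∀ m : ℕ, ∀ s : S, (N s : ℕ) = m → s ∉ core S →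
      ∃ l : List S, l ≠ [] ∧ (∀ x ∈ l, IrrInScale N (N x)) ∧ coreEquiv s l.prod from
    h _ s rfl hs
  clear hs s
  intro m
  induction m using Nat.strong_induction_on with
  | _ m ih =>
    rintro s rfl hs
    have hNs : N s ≠ 1 := fun h => hs (mem_core_of_N_eq_one hS hN h)
    obtain ⟨k, l, hk, hl, hkirr, hfac⟩ :=
      exists_irr_factor (N := N) ((N s : ℕ)) (N s) rfl ⟨s, rfl⟩ hNs
    obtain ⟨t, u, hNt, hNu, hstu⟩ := key_factor hS hN hk hl hfac
    by_cases hl1 : l = 1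
    · have hu : u ∈ core S := mem_core_of_N_eq_one hS hN (by rw [hNu, hl1])
      have htu : coreEquiv (t * u) t := ⟨1, one_mem_core, u, hu, by rw [mul_one]⟩
      have hst : coreEquiv s t := coreEquiv_trans hS hstu htu
      refine ⟨[t], by simp, ?_, by simpa using hst⟩
      intro x hx
      simp only [List.mem_singleton] at hx
      subst hx
      rwa [hNt]
    · have hucore : u ∉ core S := fun h => hl1 (by rw [← hNu, N_core_eq_one hS hN h])
      have hk2 : 2 ≤ (k : ℕ) := by
        have h3 : 0 < (k : ℕ) := k.2
        have h4 : (k : ℕ) ≠ 1 := fun hh => hkirr.1 (PNat.coe_injective (by simpa using hh))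
        omega
      have hlt : (N u : ℕ) < (N s : ℕ) := by
        rw [hNu, hfac, PNat.mul_coe]
        have h3 : 0 < (l : ℕ) := l.2
        nlinarith
      obtain ⟨L, hL1, hL2, hL3⟩ := ih _ hlt u rfl hucore
      refine ⟨t :: L, by simp, ?_, ?_⟩
      · intro x hx
        rcases List.mem_cons.mp hx with rfl | hx'
        · rwa [hNt]
        · exact hL2 x hx'
      · rw [List.prod_cons]
        exact coreEquiv_trans hS hstu (coreEquiv_mul_left hS t hL3)
end
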